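/- Let Q be a Hermitian matrix on ℂ^d ⊗ ℂ^d (identified with M_d(ℂ) ⊗ M_d(ℂ) via the Kronecker product). Then one can write Q = Σ_{α=1}^{d²} A_α ⊗ B_α with A_α, B_α ∈ M_d(ℂ) such that: (1) the family {A_α} is pairwise orthogonal with respect to the Hilbert–Schmidt inner product and ‖A_α‖_F ≤ ‖Q‖_F for every α; (2) the family {B_α} is orthonormal with respect to the Hilbert–Schmidt inner product; (3) the linear span of {A_α} is closed under conjugate transpose, and the linear span of {B_α} is closed under conjugate transpose. -/

import Mathlib

/-!
Realign `Q` into the blocks `R_{kl} = (Q_{(i,k),(j,l)})_{ij}`, so that `Q = ∑ R_{kl} ⊗ E_{kl}`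
with the matrix units `E_{kl}` orthonormal. Diagonalise the Hilbert–Schmidt Gram matrix of the
`R_{kl}` by a unitary `V` and put `A = R V`, `B = E V̄`: since `V Vᴴ = 1` we still have
`Q = ∑ A_α ⊗ B_α`, the `A_α` are now orthogonal and the `B_α` stay orthonormal. Orthonormality of
the `B_α` gives `‖Q‖² = ∑ ‖A_α‖²`, hence the norm bound. As `V` is invertible, the spans of the
`A_α` and `B_α` are those of the `R_{kl}` and `E_{kl}`, and these families are closed under `ᴴ`:
`R_{kl}ᴴ = R_{lk}` because `Q` is Hermitian, and `E_{kl}ᴴ = E_{lk}`.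
-/

open Matrix
open scoped Kronecker

/-- Hilbert–Schmidt inner product of matrices: ⟨A,B⟩ = Tr(A†B). -/
noncomputable def hsInner {n : Type*} [Fintype n] (A B : Matrix n n ℂ) : ℂ :=
  Matrix.trace (Aᴴ * B)

/-- Frobenius norm of a matrix: ‖A‖_F = √Tr(A†A). -/
noncomputable def frob {n : Type*} [Fintype n] (A : Matrix n n ℂ) : ℝ :=
  Real.sqrt (Matrix.trace (Aᴴ * A)).re

/-- A set of matrices whose linear span is closed under conjugate transpose. -/
def SpanClosedUnderConjTranspose {n : Type*} [Fintype n]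
    (S : Set (Matrix n n ℂ)) : Prop :=
  ∀ X ∈ Submodule.span ℂ S, Xᴴ ∈ Submodule.span ℂ S

section HilbertSchmidt

variable {n : Type*} [Fintype n]

open ComplexOrder in
lemma zero_le_re_hsInner_self (X : Matrix n n ℂ) : 0 ≤ (hsInner X X).re :=
  (Complex.nonneg_iff.mp (posSemidef_conjTranspose_mul_self X).trace_nonneg).1

lemma hsInner_kronecker {m : Type*} [Fintype m] (A C : Matrix m m ℂ) (B D : Matrix n n ℂ) :
    hsInner (A ⊗ₖ B) (C ⊗ₖ D) = hsInner A C * hsInner B D := by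
  rw [hsInner, conjTranspose_kronecker, ← mul_kronecker_mul, trace_kronecker, hsInner, hsInner]

lemma hsInner_sum_left {ι : Type*} (s : Finset ι) (X : ι → Matrix n n ℂ) (Y : Matrix n n ℂ) :
    hsInner (∑ p ∈ s, X p) Y = ∑ p ∈ s, hsInner (X p) Y := by
  simp only [hsInner, conjTranspose_sum, Matrix.sum_mul, trace_sum]

lemma hsInner_sum_right {ι : Type*} (s : Finset ι) (X : Matrix n n ℂ) (Y : ι → Matrix n n ℂ) :
    hsInner X (∑ p ∈ s, Y p) = ∑ p ∈ s, hsInner X (Y p) := by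
  simp only [hsInner, Matrix.mul_sum, trace_sum]

lemma hsInner_smul_left (c : ℂ) (X Y : Matrix n n ℂ) :
    hsInner (c • X) Y = star c * hsInner X Y := by
  rw [hsInner, conjTranspose_smul, smul_mul, trace_smul, smul_eq_mul, hsInner]

lemma hsInner_smul_right (c : ℂ) (X Y : Matrix n n ℂ) :
    hsInner X (c • Y) = c * hsInner X Y := by
  rw [hsInner, Matrix.mul_smul, trace_smul, smul_eq_mul, hsInner]

noncomputable def hsGram {ι : Type*} (X : ι → Matrix n n ℂ) : Matrix ι ι ℂ :=
  of fun p q => hsInner (X p) (X q)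

lemma isHermitian_hsGram {ι : Type*} (X : ι → Matrix n n ℂ) : (hsGram X).IsHermitian := by
  ext p q
  simp only [hsGram, conjTranspose_apply, of_apply, hsInner]
  rw [← trace_conjTranspose, conjTranspose_mul, conjTranspose_conjTranspose]

lemma hsInner_sum_kronecker_sum {m ι : Type*} [Fintype m] [Fintype ι]
    (X : ι → Matrix m m ℂ) (Y : ι → Matrix n n ℂ) :
    hsInner (∑ p, X p ⊗ₖ Y p) (∑ q, X q ⊗ₖ Y q) =
      ∑ p, ∑ q, hsInner (X p) (X q) * hsGram Y p q := by
  simp only [hsInner_sum_left, hsInner_sum_right, hsInner_kronecker, hsGram, of_apply]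
  exact Finset.sum_comm

lemma frob_le_frob_sum_kronecker {m ι : Type*} [Fintype m] [Fintype ι] [DecidableEq ι]
    (X : ι → Matrix m m ℂ) {Y : ι → Matrix n n ℂ} (hY : hsGram Y = 1) (a : ι) :
    frob (X a) ≤ frob (∑ p, X p ⊗ₖ Y p) := by
  have hnorm : (hsInner (∑ p, X p ⊗ₖ Y p) (∑ q, X q ⊗ₖ Y q)).re =
      ∑ p, (hsInner (X p) (X p)).re := by
    simp [hsInner_sum_kronecker_sum, hY, one_apply, Complex.re_sum]
  refine Real.sqrt_le_sqrt ?_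
  rw [← hsInner, ← hsInner, hnorm]
  exact Finset.single_le_sum (fun p _ => zero_le_re_hsInner_self (X p)) (Finset.mem_univ a)

end HilbertSchmidt

section Orthonormal

variable {n ι : Type*} [Fintype n] [DecidableEq ι] {X : ι → Matrix n n ℂ}

lemma hsInner_eq_zero_of_hsGram_eq_one (hX : hsGram X = 1) {p q : ι} (h : p ≠ q) :
    hsInner (X p) (X q) = 0 := by
  simpa [hsGram, one_apply_ne h] using congrFun (congrFun hX p) q

lemma frob_eq_one_of_hsGram_eq_one (hX : hsGram X = 1) (p : ι) : frob (X p) = 1 := by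
  have h : hsInner (X p) (X p) = 1 := by simpa [hsGram] using congrFun (congrFun hX p) p
  rw [frob, ← hsInner, h, Complex.one_re, Real.sqrt_one]

end Orthonormal

section Recombine

variable {n ι κ : Type*} [Fintype ι]

noncomputable def recombine (V : Matrix ι κ ℂ) (X : ι → Matrix n n ℂ) (a : κ) : Matrix n n ℂ :=
  ∑ p, V p a • X p

lemma recombine_recombine {ν : Type*} [Fintype κ] (V : Matrix ι κ ℂ) (W : Matrix κ ν ℂ)
    (X : ι → Matrix n n ℂ) : recombine W (recombine V X) = recombine (V * W) X := by
  funext b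
  simp only [recombine, Finset.smul_sum, smul_smul, mul_apply, Finset.sum_smul]
  rw [Finset.sum_comm]
  simp only [mul_comm]

lemma recombine_one [DecidableEq ι] (X : ι → Matrix n n ℂ) : recombine 1 X = X := by
  funext a
  simp [recombine, one_apply]

lemma span_range_recombine_le (V : Matrix ι κ ℂ) (X : ι → Matrix n n ℂ) :
    Submodule.span ℂ (Set.range (recombine V X)) ≤ Submodule.span ℂ (Set.range X) :=
  Submodule.span_le.mpr <| Set.range_subset_iff.mpr fun _ =>
    Submodule.sum_mem _ fun p _ => Submodule.smul_mem _ _ (Submodule.subset_span ⟨p, rfl⟩)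

lemma span_range_recombine_of_mul_eq_one [Fintype κ] [DecidableEq ι] {V : Matrix ι κ ℂ}
    {W : Matrix κ ι ℂ} (h : V * W = 1) (X : ι → Matrix n n ℂ) :
    Submodule.span ℂ (Set.range (recombine V X)) = Submodule.span ℂ (Set.range X) := by
  refine le_antisymm (span_range_recombine_le V X) ?_
  conv_lhs => rw [← recombine_one X, ← h, ← recombine_recombine]
  exact span_range_recombine_le W _

lemma spanClosedUnderConjTranspose_range_recombine_iff [Fintype n] [Fintype κ] [DecidableEq ι]
    {V : Matrix ι κ ℂ} {W : Matrix κ ι ℂ} (h : V * W = 1) (X : ι → Matrix n n ℂ) :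
    SpanClosedUnderConjTranspose (Set.range (recombine V X)) ↔
      SpanClosedUnderConjTranspose (Set.range X) := by
  unfold SpanClosedUnderConjTranspose
  rw [span_range_recombine_of_mul_eq_one h]

lemma hsGram_recombine [Fintype n] (V : Matrix ι κ ℂ) (X : ι → Matrix n n ℂ) :
    hsGram (recombine V X) = Vᴴ * hsGram X * V := by
  ext a b
  simp only [hsGram, recombine, of_apply, hsInner_sum_left, hsInner_sum_right, hsInner_smul_left,
    hsInner_smul_right, mul_apply, conjTranspose_apply, Finset.sum_mul, Finset.mul_sum]
  refine Finset.sum_congr rfl fun p _ => Finset.sum_congr rfl fun q _ => by ring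

lemma sum_kronecker_recombine {m : Type*} [Fintype κ] [DecidableEq ι]
    {V W : Matrix ι κ ℂ} (h : V * Wᵀ = 1) (X : ι → Matrix m m ℂ) (Y : ι → Matrix n n ℂ) :
    ∑ a, recombine V X a ⊗ₖ recombine W Y a = ∑ p, X p ⊗ₖ Y p := by
  have hVW : ∀ p q, ∑ a, V p a * W q a = if p = q then 1 else 0 := fun p q => by
    simpa [mul_apply, one_apply] using congrFun (congrFun h p) q
  ext ⟨i, k⟩ ⟨j, l⟩
  simp only [Matrix.sum_apply, kroneckerMap_apply, recombine, Matrix.smul_apply, smul_eq_mul,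
    Finset.sum_mul, Finset.mul_sum]
  calc _ = ∑ p, ∑ q, (∑ a, V p a * W q a) * (X p i j * Y q k l) := by
        rw [Finset.sum_comm]
        simp_rw [Finset.sum_comm (γ := κ), Finset.sum_mul]
        rw [Finset.sum_comm]
        exact Finset.sum_congr rfl fun _ _ => Finset.sum_congr rfl fun _ _ =>
          Finset.sum_congr rfl fun _ _ => by ring
    _ = _ := by simp [hVW]

end Recombine

lemma spanClosedUnderConjTranspose_range {n ι : Type*} [Fintype n] [Fintype ι]
    {X : ι → Matrix n n ℂ} (hX : ∀ p, (X p)ᴴ ∈ Set.range X) :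
    SpanClosedUnderConjTranspose (Set.range X) := by
  intro Y hY
  obtain ⟨c, rfl⟩ := (Submodule.mem_span_range_iff_exists_fun ℂ).mp hY
  simp only [conjTranspose_sum, conjTranspose_smul]
  exact Submodule.sum_mem _ fun p _ => Submodule.smul_mem _ _ (Submodule.subset_span (hX p))

section Realignment

variable {m n : Type*} [Fintype n] [DecidableEq n]

def realign (Q : Matrix (m × n) (m × n) ℂ) (p : n × n) : Matrix m m ℂ :=
  of fun i j => Q (i, p.1) (j, p.2)

def matrixUnit (p : n × n) : Matrix n n ℂ :=
  single p.1 p.2 1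

lemma sum_realign_kronecker_matrixUnit (Q : Matrix (m × n) (m × n) ℂ) :
    ∑ p, realign Q p ⊗ₖ matrixUnit p = Q := by
  ext ⟨i, k⟩ ⟨j, l⟩
  simp [Matrix.sum_apply, realign, matrixUnit, single_apply, Fintype.sum_prod_type, ite_and]

omit [Fintype n] [DecidableEq n] in
lemma Matrix.IsHermitian.conjTranspose_realign {Q : Matrix (m × n) (m × n) ℂ} (hQ : Q.IsHermitian)
    (p : n × n) : (realign Q p)ᴴ = realign Q p.swap := by
  ext i j
  exact hQ.apply (i, p.2) (j, p.1)

omit [Fintype n] in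
lemma conjTranspose_matrixUnit (p : n × n) : (matrixUnit p)ᴴ = matrixUnit p.swap := by
  simp [matrixUnit, conjTranspose_single]

lemma hsGram_matrixUnit : hsGram (matrixUnit (n := n)) = 1 := by
  ext p q
  simp [hsGram, hsInner, matrixUnit, conjTranspose_single, trace_single_mul, single_apply,
    one_apply, Prod.ext_iff, eq_comm]

end Realignment

lemma Matrix.IsHermitian.exists_unitary_isDiag {ι : Type*} [Fintype ι] [DecidableEq ι]
    {G : Matrix ι ι ℂ} (hG : G.IsHermitian) :
    ∃ V ∈ unitaryGroup ι ℂ, (Vᴴ * G * V).IsDiag := by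
  refine ⟨hG.eigenvectorUnitary, hG.eigenvectorUnitary.2, ?_⟩
  rw [← star_eq_conjTranspose, ← Unitary.conjStarAlgAut_star_apply (S := ℂ),
    hG.conjStarAlgAut_star_eigenvectorUnitary]
  exact isDiag_diagonal _

theorem exists_schmidt_decomposition {m n : Type*} [Fintype m] [Fintype n] [DecidableEq n]
    {Q : Matrix (m × n) (m × n) ℂ} (hQ : Q.IsHermitian) :
    ∃ (A : n × n → Matrix m m ℂ) (B : n × n → Matrix n n ℂ),
      Q = ∑ p, A p ⊗ₖ B p ∧ (hsGram A).IsDiag ∧ hsGram B = 1 ∧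
      SpanClosedUnderConjTranspose (Set.range A) ∧ SpanClosedUnderConjTranspose (Set.range B) := by
  obtain ⟨V, hV, hdiag⟩ := (isHermitian_hsGram (realign Q)).exists_unitary_isDiag
  have hVV : V * Vᴴ = 1 := mem_unitaryGroup_iff.mp hV
  have hVV' : Vᴴ * V = 1 := mem_unitaryGroup_iff'.mp hV
  have hW : Vᴴᵀᴴ = Vᵀ := by ext; simp
  have hWW : Vᴴᵀᴴ * Vᴴᵀ = 1 := by rw [hW, ← transpose_mul, hVV', transpose_one]
  have hWW' : Vᴴᵀ * Vᴴᵀᴴ = 1 := by rw [hW, ← transpose_mul, hVV, transpose_one]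
  refine ⟨recombine V (realign Q), recombine Vᴴᵀ matrixUnit, ?_, ?_, ?_, ?_, ?_⟩
  · rw [sum_kronecker_recombine (by rwa [transpose_transpose]), sum_realign_kronecker_matrixUnit]
  · rwa [hsGram_recombine]
  · rw [hsGram_recombine, hsGram_matrixUnit, Matrix.mul_one, hWW]
  · rw [spanClosedUnderConjTranspose_range_recombine_iff hVV]
    exact spanClosedUnderConjTranspose_range fun p => ⟨p.swap, (hQ.conjTranspose_realign p).symm⟩
  · rw [spanClosedUnderConjTranspose_range_recombine_iff hWW']
    exact spanClosedUnderConjTranspose_range fun p => ⟨p.swap, (conjTranspose_matrixUnit p).symm⟩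

/-- **Lemma 1 of the paper.**  Every Hermitian matrix `Q` on `ℂ^d ⊗ ℂ^d` can be
written as `Q = Σ_{α=1}^{d²} A_α ⊗ B_α` where (1) the `A_α` are pairwise
orthogonal with `‖A_α‖_F ≤ ‖Q‖_F`, (2) the `B_α` are orthonormal, and (3) the
spans of `{A_α}` and of `{B_α}` are each closed under conjugate transpose. -/
theorem hermitian_operator_schmidt_decomposition (d : ℕ)
    (Q : Matrix (Fin d × Fin d) (Fin d × Fin d) ℂ) (hQ : Q.IsHermitian) :
    ∃ (A B : Fin (d ^ 2) → Matrix (Fin d) (Fin d) ℂ),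
      Q = ∑ α, A α ⊗ₖ B α ∧
      (∀ α β, α ≠ β → hsInner (A α) (A β) = 0) ∧
      (∀ α, frob (A α) ≤ frob Q) ∧
      (∀ α β, α ≠ β → hsInner (B α) (B β) = 0) ∧
      (∀ α, frob (B α) = 1) ∧
      SpanClosedUnderConjTranspose (Set.range A) ∧
      SpanClosedUnderConjTranspose (Set.range B) := by
  obtain ⟨A, B, hsum, hA, hB, hspanA, hspanB⟩ := exists_schmidt_decomposition hQ
  let e : Fin (d ^ 2) ≃ Fin d × Fin d := (finCongr (sq d)).trans finProdFinEquiv.symm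
  have hrange {X : Fin d × Fin d → Matrix (Fin d) (Fin d) ℂ} : Set.range (X ∘ e) = Set.range X :=
    e.surjective.range_comp X
  refine ⟨A ∘ e, B ∘ e, hsum.trans (e.sum_comp fun p => A p ⊗ₖ B p).symm,
    fun α β h => hA (e.injective.ne h), fun α => ?_,
    fun α β h => hsInner_eq_zero_of_hsGram_eq_one hB (e.injective.ne h),
    fun α => frob_eq_one_of_hsGram_eq_one hB (e α), hrange ▸ hspanA, hrange ▸ hspanB⟩
  rw [hsum]
  exact frob_le_frob_sum_kronecker A hB (e α)
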